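/- Let G = (V,E) be a directed Eulerian graph without parallel edges or self-loops, and define A(G) = { v ∈ V : d(v) = 1, or (d(v) = 2 and v is a cut node of U(G)) }. Then G has a unique Eulerian circuit (up to cyclic rotation) if and only if A(G) = V. -/

import Mathlib

/-- The underlying undirected simple graph of a directed graph `E` (no self-loops). -/
def underlyingUG {V : Type*} (E : V → V → Prop) : SimpleGraph V where
  Adj a b := a ≠ b ∧ (E a b ∨ E b a)
  symm := ⟨fun a b h => ⟨h.1.symm, h.2.symm⟩⟩
  loopless := ⟨fun a h => h.1 rfl⟩

/-- Out-degree of `v`: number of out-neighbors. -/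
noncomputable def outdeg {V : Type*} (E : V → V → Prop) (v : V) : ℕ := Set.ncard {w | E v w}

/-- In-degree of `v`: number of in-neighbors. -/
noncomputable def indeg {V : Type*} (E : V → V → Prop) (v : V) : ℕ := Set.ncard {u | E u v}

/-- The cyclic sequence of consecutive pairs of a circuit given as a vertex list. -/
def cyclicPairs {V : Type*} (c : List V) : List (V × V) := c.zip (c.rotate 1)

/-- `c` is an Eulerian circuit: a nonempty closed walk using every edge exactly once. -/
def IsEulerianCircuit {V : Type*} (E : V → V → Prop) (c : List V) : Prop :=
  c ≠ [] ∧ (cyclicPairs c).Nodup ∧ ∀ p : V × V, p ∈ cyclicPairs c ↔ E p.1 p.2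

/-- The walk `q` appears (cyclically, as consecutive edges) in the circuit `c`. -/
def Appears {V : Type*} (q c : List V) : Prop :=
  ∃ k, (q.zip q.tail) <:+: cyclicPairs (c.rotate k)

/-- `v` is a cut node of the connected undirected graph `H`. -/
def IsCutNode {V : Type*} (H : SimpleGraph V) (v : V) : Prop :=
  ¬ (H.induce {u | u ≠ v}).Connected

/-- The underlying undirected graph with node `v` (and incident edges) removed. -/
def delNode {V : Type*} (E : V → V → Prop) (v : V) := (underlyingUG E).induce {u | u ≠ v}

/-- `v ∈ A(G)`: `d(v) = 1`, or `d(v) = 2` and `v` is a cut node of `U(G)`. -/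
def inA {V : Type*} (E : V → V → Prop) (v : V) : Prop :=
  outdeg E v = 1 ∨ (outdeg E v = 2 ∧ IsCutNode (underlyingUG E) v)

/-!
An Eulerian circuit `c`, read as its cyclic list of edges `cyclicPairs c`, is determined up to
rotation by its transition permutation `(cyclicPairs c).formPerm`, which sends each edge to the
edge following it in the circuit. The transition after an edge `(u, x)` is forced when `d(x) = 1`.
When `d(x) = 2` the circuit reads `x S x T` with closed walks `S`, `T` avoiding `x` and covering all
other vertices; if `x` is a cut node, `S` and `T` lie in different components of `U(G) - x`, so
after entering `x` from `u` the circuit must leave towards the out-neighbour in the component not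
containing `u`. Hence `A(G) = V` forces all transitions. Conversely, if `d(v) ≥ 3` the circuit reads
`v S v T v R` and `v S v R v T` is another Eulerian circuit; if `d(v) = 2` and `U(G) - v` is
connected, the closed walks `S`, `T` in `v S v T` share a vertex `w`, and exchanging the parts of
`S` and `T` after `w` gives another one. In both cases a transition changes, so the two circuits
are not rotations of each other.
-/

open List

theorem List.IsChain.reachable {α : Type*} {G : SimpleGraph α} {l : List α} (h : l.IsChain G.Adj)
    {a b : α} (ha : a ∈ l) (hb : b ∈ l) : G.Reachable a b := by
  have hne := ne_nil_of_mem ha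
  have from_head : ∀ c ∈ l, G.Reachable (l.head hne) c :=
    h.induction _ _ (fun _ _ hadj hr => hr.trans hadj.reachable) (fun _ => .rfl)
  exact (from_head a ha).symm.trans (from_head b hb)

section Lists

variable {α : Type*}

/-- The consecutive pairs of the walk `l ++ [b]`. -/
def walkPairs (l : List α) (b : α) : List (α × α) := l.zip (l.tail ++ [b])

theorem walkPairs_cons (a : α) (l : List α) (b : α) :
    walkPairs (a :: l) b = (a, (l ++ [b]).head (by simp)) :: walkPairs l b := by
  cases l <;> rfl

theorem walkPairs_append_cons (l₁ l₂ : List α) (a b : α) :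
    walkPairs (l₁ ++ a :: l₂) b = walkPairs l₁ a ++ walkPairs (a :: l₂) b := by
  induction l₁ with
  | nil => rfl
  | cons c l₁ ih => cases l₁ <;> simp_all [walkPairs_cons]

theorem walkPairs_concat (l : List α) (a b : α) :
    walkPairs (l ++ [a]) b = walkPairs l a ++ [(a, b)] :=
  walkPairs_append_cons l [] a b

theorem mem_walkPairs {l : List α} {b : α} {p : α × α} (h : p ∈ walkPairs l b) :
    p.1 ∈ l ∧ p.2 ∈ l.tail ++ [b] :=
  of_mem_zip h

theorem isChain_append_singleton_iff {R : α → α → Prop} {l : List α} {b : α} :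
    IsChain R (l ++ [b]) ↔ ∀ p ∈ walkPairs l b, R p.1 p.2 := by
  induction l with
  | nil => simp [walkPairs]
  | cons a l ih => cases l <;> simp_all [walkPairs_cons]

theorem cyclicPairs_cons (a : α) (l : List α) : cyclicPairs (a :: l) = walkPairs (a :: l) a := by
  simp [cyclicPairs, walkPairs]

theorem map_fst_cyclicPairs (c : List α) : (cyclicPairs c).map Prod.fst = c :=
  map_fst_zip (by simp)

theorem cyclicPairs_rotate (c : List α) (k : ℕ) :
    cyclicPairs (c.rotate k) = (cyclicPairs c).rotate k := by
  rw [cyclicPairs, cyclicPairs, rotate_rotate, add_comm, ← rotate_rotate]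
  exact (zipWith_rotate_distrib _ _ _ _ (by simp)).symm

theorem List.IsRotated.cyclicPairs {c c' : List α} (h : c ~r c') :
    cyclicPairs c ~r cyclicPairs c' := by
  obtain ⟨k, rfl⟩ := h
  exact ⟨k, (cyclicPairs_rotate c k).symm⟩

theorem walkPairs_cons_append_cons (a c b : α) (l₁ l₂ : List α) :
    walkPairs (a :: (l₁ ++ c :: l₂)) b = walkPairs (a :: l₁) c ++ walkPairs (c :: l₂) b :=
  walkPairs_append_cons (a :: l₁) l₂ c b

theorem walkPairs_cons_ne_nil (a : α) (l : List α) (b : α) : walkPairs (a :: l) b ≠ [] := by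
  simp [walkPairs_cons]

theorem eq_head_of_mem_walkPairs_cons {a b z : α} {l : List α} (h : (a, z) ∈ walkPairs (a :: l) b)
    (ha : a ∉ l) : z = (l ++ [b]).head (by simp) := by
  rw [walkPairs_cons, mem_cons] at h
  rcases h with h | h
  · exact (Prod.mk.inj h).2
  · exact absurd (mem_walkPairs h).1 ha

theorem cyclicPairs_cons_append_cons (x : α) (S T : List α) :
    cyclicPairs (x :: S ++ x :: T) = walkPairs (x :: S) x ++ walkPairs (x :: T) x := by
  rw [cons_append, cyclicPairs_cons, walkPairs_cons_append_cons]

theorem exists_rotate_eq_cons {c : List α} {x : α} (h : x ∈ c) : ∃ k r, c.rotate k = x :: r := by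
  obtain ⟨s, t, rfl⟩ := append_of_mem h
  exact ⟨s.length, t ++ s, rotate_append_length_eq s (x :: t)⟩

theorem exists_rotate_eq_cons_append_singleton {c : List α} {u x : α}
    (hp : (u, x) ∈ cyclicPairs c) (hux : u ≠ x) : ∃ k r, c.rotate k = x :: (r ++ [u]) := by
  obtain ⟨A, B, hAB⟩ := append_of_mem hp
  have hlast : cyclicPairs (c.rotate (A ++ [(u, x)]).length) = B ++ A ++ [(u, x)] := by
    rw [cyclicPairs_rotate, hAB, ← singleton_append, ← append_assoc, rotate_append_length_eq,
      append_assoc]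
  refine ⟨(A ++ [(u, x)]).length, ?_⟩
  generalize c.rotate (A ++ [(u, x)]).length = c' at hlast
  rcases c' with _ | ⟨a, r'⟩
  · simp [cyclicPairs] at hlast
  have hlast' := congrArg getLast? hlast
  rcases eq_nil_or_concat' r' with rfl | ⟨r, b, rfl⟩
  · simp [cyclicPairs_cons, walkPairs] at hlast'
    exact absurd (hlast'.1.symm.trans hlast'.2) hux
  · rw [cyclicPairs_cons, ← cons_append, walkPairs_concat] at hlast'
    simp only [getLast?_append, getLast?_singleton, Option.some_or, Option.some.injEq,
      Prod.mk.injEq] at hlast'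
    obtain ⟨rfl, rfl⟩ := hlast'
    exact ⟨r, rfl⟩

theorem perm_append_swap (B₁ B₂ B₃ M : List α) :
    (B₁ ++ B₃ ++ M ++ B₂).Perm (B₁ ++ B₂ ++ M ++ B₃) := by
  simp only [append_assoc, perm_append_left_iff]
  calc B₃ ++ (M ++ B₂) ~ (B₂ ++ M) ++ B₃ := perm_append_comm.trans (perm_append_comm.append_right _)
    _ = B₂ ++ (M ++ B₃) := append_assoc _ _ _

variable [DecidableEq α]

theorem exists_eq_append_cons_of_count_eq_two {x : α} {l : List α}
    (h : (x :: l).count x = 2) : ∃ S T, l = S ++ x :: T ∧ x ∉ S ∧ x ∉ T := by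
  rw [count_cons_self] at h
  obtain ⟨S, T, rfl, hS⟩ := eq_append_cons_of_mem (count_pos_iff.mp (by omega : 0 < l.count x))
  refine ⟨S, T, rfl, hS, fun hT => ?_⟩
  rw [count_append, count_cons_self, count_eq_zero_of_not_mem hS] at h
  have := count_pos_iff.mpr hT
  omega

theorem fst_formPerm_cyclicPairs {c : List α} (hc : (cyclicPairs c).Nodup) {p : α × α}
    (hp : p ∈ cyclicPairs c) : ((cyclicPairs c).formPerm p).1 = p.2 := by
  obtain ⟨i, hi, rfl⟩ := getElem_of_mem hp
  rw [formPerm_apply_getElem _ hc]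
  simp [cyclicPairs, getElem_zip, getElem_rotate]

theorem formPerm_apply_of_append_cons_cons {L M : List α} {a b : α}
    (h : (L ++ a :: b :: M).Nodup) : (L ++ a :: b :: M).formPerm a = b := by
  rw [← formPerm_rotate _ h L.length, rotate_append_length_eq]
  exact formPerm_apply_head _ _ _ (isRotated_append.nodup_iff.mp h)

theorem formPerm_append_swap_ne {B₁ B₂ B₃ M : List α} (h : (B₁ ++ B₂ ++ M ++ B₃).Nodup)
    (h₁ : B₁ ≠ []) (h₂ : B₂ ≠ []) (h₃ : B₃ ≠ []) :
    (B₁ ++ B₂ ++ M ++ B₃).formPerm ≠ (B₁ ++ B₃ ++ M ++ B₂).formPerm := by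
  have h' := (perm_append_swap B₁ B₂ B₃ M).nodup_iff.mpr h
  obtain ⟨X, e, rfl⟩ := (eq_nil_or_concat' B₁).resolve_left h₁
  obtain ⟨f, Y, rfl⟩ := exists_cons_of_ne_nil h₂
  obtain ⟨g, Z, rfl⟩ := exists_cons_of_ne_nil h₃
  simp only [append_assoc, cons_append, nil_append] at h h' ⊢
  intro heq
  have hfg : f = g := by
    rw [← formPerm_apply_of_append_cons_cons h, heq, formPerm_apply_of_append_cons_cons h']
  subst hfg
  simpa using h.sublist (l₁ := [f, f]) (by simp)

theorem formPerm_cyclicPairs_cons_append_singleton (x u : α) (r : List α) :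
    (cyclicPairs (x :: (r ++ [u]))).formPerm (u, x) = (x, (r ++ [u]).head (by simp)) := by
  rw [cyclicPairs_cons, walkPairs_cons, walkPairs_concat]
  have := formPerm_apply_getLast (x, (r ++ [u] ++ [x]).head (by simp)) (walkPairs r u ++ [(u, x)])
  rw [getLast_cons (by simp), getLast_append_of_ne_nil _ (by simp), getLast_singleton] at this
  rw [this]
  cases r <;> rfl

theorem isRotated_iff_formPerm_cyclicPairs_eq {c c' : List α} (hc : (cyclicPairs c).Nodup)
    (hc' : (cyclicPairs c').Nodup) (h₁ : 2 ≤ c.length) (h₂ : 2 ≤ c'.length) :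
    c ~r c' ↔ (cyclicPairs c).formPerm = (cyclicPairs c').formPerm := by
  refine ⟨fun h => formPerm_eq_of_isRotated hc h.cyclicPairs, fun h => ?_⟩
  have hlen : ∀ d : List α, (cyclicPairs d).length = d.length := fun d => by simp [cyclicPairs]
  obtain ⟨p, q, l, hl⟩ : ∃ p q l, cyclicPairs c = p :: q :: l := by
    match cyclicPairs c, hlen c ▸ h₁ with
    | p :: q :: l, _ => exact ⟨p, q, l, rfl⟩
  obtain ⟨p', q', l', hl'⟩ : ∃ p q l, cyclicPairs c' = p :: q :: l := by
    match cyclicPairs c', hlen c' ▸ h₂ with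
    | p :: q :: l, _ => exact ⟨p, q, l, rfl⟩
  rw [hl] at h hc
  rw [hl'] at h hc'
  have := ((formPerm_ext_iff hc hc').mp h).map Prod.fst
  rwa [← hl, ← hl', map_fst_cyclicPairs, map_fst_cyclicPairs] at this

end Lists

section Graph

variable {V : Type*} {E : V → V → Prop} {c : List V}

theorem IsEulerianCircuit.rotate (hc : IsEulerianCircuit E c) (k : ℕ) :
    IsEulerianCircuit E (c.rotate k) := by
  obtain ⟨hne, hnd, hmem⟩ := hc
  refine ⟨by simpa using hne, by simpa [cyclicPairs_rotate] using hnd, fun p => ?_⟩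
  rw [cyclicPairs_rotate, mem_rotate]
  exact hmem p

theorem IsEulerianCircuit.append_comm {l₁ l₂ : List V} (hc : IsEulerianCircuit E (l₁ ++ l₂)) :
    IsEulerianCircuit E (l₂ ++ l₁) := by
  simpa [rotate_append_length_eq] using hc.rotate l₁.length

theorem IsEulerianCircuit.of_perm {c' : List V} (hc : IsEulerianCircuit E c)
    (h : (cyclicPairs c').Perm (cyclicPairs c)) : IsEulerianCircuit E c' := by
  refine ⟨?_, h.nodup_iff.mpr hc.2.1, fun p => h.mem_iff.trans (hc.2.2 p)⟩
  rintro rfl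
  simpa [cyclicPairs, eq_comm (a := 0), hc.1] using h.length_eq

theorem IsEulerianCircuit.mem_of_adj (hc : IsEulerianCircuit E c) {a b : V}
    (h : (underlyingUG E).Adj a b) : b ∈ c := by
  rcases h.2 with h | h
  · simpa [cyclicPairs] using (of_mem_zip ((hc.2.2 (a, b)).mpr h)).2
  · exact (of_mem_zip ((hc.2.2 (b, a)).mpr h)).1

theorem IsEulerianCircuit.mem (hconn : (underlyingUG E).Connected) (hc : IsEulerianCircuit E c)
    (z : V) : z ∈ c := by
  obtain ⟨a, ha⟩ := exists_mem_of_ne_nil _ hc.1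
  rcases ((SimpleGraph.reachable_iff_reflTransGen a z).mp (hconn a z)).cases_tail with
    rfl | ⟨b, -, hbz⟩
  · exact ha
  · exact hc.mem_of_adj hbz

theorem IsEulerianCircuit.count_eq_outdeg [DecidableEq V] (hc : IsEulerianCircuit E c) (x : V) :
    c.count x = outdeg E x := by
  have himage :
      (fun w => (x, w)) '' {w | E x w} = ↑((cyclicPairs c).filter (·.1 = x)).toFinset := by
    ext ⟨a, w⟩
    simp only [Set.mem_image, Prod.mk.injEq, Finset.mem_coe, mem_toFinset, mem_filter, hc.2.2,
      decide_eq_true_eq]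
    grind
  rw [outdeg, ← Set.ncard_image_of_injective _ (Prod.mk_right_injective x), himage,
    Set.ncard_coe_finset, toFinset_card_of_nodup (hc.2.1.filter _), ← countP_eq_length_filter]
  conv_lhs => rw [← map_fst_cyclicPairs c, count_eq_countP, countP_map]
  rfl

theorem IsEulerianCircuit.two_le_length (hloop : ∀ x : V, ¬ E x x) (hc : IsEulerianCircuit E c) :
    2 ≤ c.length := by
  match c, hc with
  | [a], hc => exact absurd ((hc.2.2 (a, a)).mp (by simp [cyclicPairs])) (hloop a)
  | _ :: _ :: _, _ => simp

theorem IsEulerianCircuit.exists_formPerm_apply_eq [DecidableEq V] (hc : IsEulerianCircuit E c)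
    {u x : V} (h : E u x) : ∃ y, (cyclicPairs c).formPerm (u, x) = (x, y) ∧ E x y := by
  have hmem := (hc.2.2 (u, x)).mpr h
  have hfst := fst_formPerm_cyclicPairs hc.2.1 hmem
  refine ⟨_, Prod.ext hfst rfl, ?_⟩
  simpa [hfst] using (hc.2.2 _).mp (formPerm_apply_mem_of_mem hmem)

section Blocks

variable {x : V} {S T : List V}

theorem IsEulerianCircuit.ne_nil_left (hloop : ∀ x : V, ¬ E x x)
    (hc : IsEulerianCircuit E (x :: S ++ x :: T)) : S ≠ [] := by
  rintro rfl
  exact hloop x ((hc.2.2 (x, x)).mp (by rw [cyclicPairs_cons_append_cons]; simp [walkPairs]))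

theorem IsEulerianCircuit.isChain_left (hloop : ∀ x : V, ¬ E x x)
    (hc : IsEulerianCircuit E (x :: S ++ x :: T)) : S.IsChain (underlyingUG E).Adj := by
  have hchain : (x :: S ++ [x]).IsChain E := isChain_append_singleton_iff.mpr fun p hp =>
    (hc.2.2 p).mp (by rw [cyclicPairs_cons_append_cons]; exact mem_append_left _ hp)
  refine (hchain.infix ⟨[x], [x], rfl⟩).imp fun a b hab => ⟨?_, Or.inl hab⟩
  rintro rfl
  exact hloop a hab

theorem IsEulerianCircuit.reachable_of_mem_left (hloop : ∀ x : V, ¬ E x x) (hS : x ∉ S)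
    (hc : IsEulerianCircuit E (x :: S ++ x :: T)) {a b : V} (ha : a ∈ S) (hb : b ∈ S) :
    (delNode E x).Reachable ⟨a, ne_of_mem_of_not_mem ha hS⟩ ⟨b, ne_of_mem_of_not_mem hb hS⟩ := by
  have hchain := isChain_pmap_of_isChain (S := (delNode E x).Adj) (f := Subtype.mk)
    (fun _ _ _ _ h => h) (hc.isChain_left hloop) (fun _ h => ne_of_mem_of_not_mem h hS)
  exact hchain.reachable (mem_pmap_of_mem ha) (mem_pmap_of_mem hb)

theorem IsEulerianCircuit.mem_left_of_reachable (hS : x ∉ S)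
    (hc : IsEulerianCircuit E (x :: S ++ x :: T)) (hST : S.Disjoint T)
    {a b : {u | u ≠ x}} (h : (delNode E x).Reachable a b) (ha : a.1 ∈ S) : b.1 ∈ S := by
  have step : ∀ p q : V, (underlyingUG E).Adj p q → p ∈ S → q ≠ x → q ∈ S := by
    intro p q hpq hp hq
    have mem : ∀ {a b}, E a b → (a, b) ∈ walkPairs (x :: S) x ++ walkPairs (x :: T) x :=
      fun he => cyclicPairs_cons_append_cons x S T ▸ (hc.2.2 _).mpr he
    have hpx : p ≠ x := ne_of_mem_of_not_mem hp hS
    rcases hpq.2 with he | he <;> rcases mem_append.mp (mem he) with h | h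
    · simpa [hq] using (mem_walkPairs h).2
    · exact absurd ((mem_cons.mp (mem_walkPairs h).1).resolve_left hpx) (hST hp)
    · exact (mem_cons.mp (mem_walkPairs h).1).resolve_left hq
    · have : p ∈ T ++ [x] := (mem_walkPairs h).2
      simp only [mem_append, mem_singleton, hpx, or_false] at this
      exact absurd this (hST hp)
  obtain hr := (SimpleGraph.reachable_iff_reflTransGen a b).mp h
  clear h
  induction hr with
  | refl => exact ha
  | @tail _ d _ hbd ih => exact step _ _ hbd ih d.2

theorem IsEulerianCircuit.connected_delNode_iff (hloop : ∀ x : V, ¬ E x x)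
    (hconn : (underlyingUG E).Connected) (hS : x ∉ S) (hT : x ∉ T)
    (hc : IsEulerianCircuit E (x :: S ++ x :: T)) :
    (delNode E x).Connected ↔ ∃ w, w ∈ S ∧ w ∈ T := by
  have hc' : IsEulerianCircuit E (x :: T ++ x :: S) := hc.append_comm
  constructor
  · intro hx
    by_contra! hST
    have hSne := hc.ne_nil_left hloop
    have hTne := hc'.ne_nil_left hloop
    have hr := hx.preconnected ⟨_, ne_of_mem_of_not_mem (head_mem hSne) hS⟩
      ⟨_, ne_of_mem_of_not_mem (head_mem hTne) hT⟩
    exact hST _ (hc.mem_left_of_reachable hS (fun _ h h' => hST _ h h') hr (head_mem hSne))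
      (head_mem hTne)
  · rintro ⟨w, hwS, hwT⟩
    have to_w : ∀ a : {u | u ≠ x}, (delNode E x).Reachable a ⟨w, ne_of_mem_of_not_mem hwS hS⟩ := by
      rintro ⟨a, ha⟩
      rcases mem_append.mp ((mem_cons.mp (hc.mem hconn a)).resolve_left ha) with haS | haxT
      · exact hc.reachable_of_mem_left hloop hS haS hwS
      · exact hc'.reachable_of_mem_left hloop hT ((mem_cons.mp haxT).resolve_left ha) hwT
    exact (SimpleGraph.connected_iff _).mpr
      ⟨fun a b => (to_w a).trans (to_w b).symm, ⟨_, ne_of_mem_of_not_mem hwS hS⟩⟩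

end Blocks

theorem IsEulerianCircuit.reachable_delNode_iff_of_cons_append_cons (hloop : ∀ x : V, ¬ E x x)
    (hconn : (underlyingUG E).Connected) {x : V} {S T : List V} (hS : x ∉ S) (hT : x ∉ T)
    (hc : IsEulerianCircuit E (x :: S ++ x :: T)) (hcut : IsCutNode (underlyingUG E) x)
    {u z : V} (hu : u ∈ S) (hxz : E x z) (hz : z ≠ x) :
    (delNode E x).Reachable ⟨u, ne_of_mem_of_not_mem hu hS⟩ ⟨z, hz⟩ ↔
      z ≠ (T ++ [x]).head (by simp) := by
  have hc' : IsEulerianCircuit E (x :: T ++ x :: S) := hc.append_comm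
  have hST : S.Disjoint T := fun w hwS hwT =>
    hcut ((hc.connected_delNode_iff hloop hconn hS hT).mpr ⟨w, hwS, hwT⟩)
  have head_mem_of_ne {L : List V} (hL : L ≠ []) : (L ++ [x]).head (by simp) ∈ L := by
    rw [head_append_of_ne_nil hL]; exact head_mem hL
  have hyT := head_mem_of_ne (hc'.ne_nil_left hloop)
  have hxz' : (x, z) ∈ walkPairs (x :: S) x ++ walkPairs (x :: T) x :=
    cyclicPairs_cons_append_cons x S T ▸ (hc.2.2 _).mpr hxz
  constructor
  · rintro hr rfl
    exact hST (hc.mem_left_of_reachable hS hST hr hu) hyT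
  · intro hzy
    rcases mem_append.mp hxz' with h | h
    · have hzS : z ∈ S := eq_head_of_mem_walkPairs_cons h hS ▸
        head_mem_of_ne (hc.ne_nil_left hloop)
      exact hc.reachable_of_mem_left hloop hS hu hzS
    · exact absurd (eq_head_of_mem_walkPairs_cons h hT) hzy

theorem IsEulerianCircuit.reachable_delNode_iff [DecidableEq V] (hloop : ∀ x : V, ¬ E x x)
    (hconn : (underlyingUG E).Connected) (hc : IsEulerianCircuit E c) {u x y z : V}
    (hd : outdeg E x = 2) (hcut : IsCutNode (underlyingUG E) x) (hux : E u x) (hu : u ≠ x)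
    (hy : (cyclicPairs c).formPerm (u, x) = (x, y)) (hxz : E x z) (hz : z ≠ x) :
    (delNode E x).Reachable ⟨u, hu⟩ ⟨z, hz⟩ ↔ z ≠ y := by
  obtain ⟨k, r, hk⟩ := exists_rotate_eq_cons_append_singleton ((hc.2.2 _).mpr hux) hu
  have hc' : IsEulerianCircuit E (x :: (r ++ [u])) := hk ▸ hc.rotate k
  rw [← formPerm_rotate _ hc.2.1 k, ← cyclicPairs_rotate, hk,
    formPerm_cyclicPairs_cons_append_singleton, Prod.mk.injEq] at hy
  obtain ⟨T, S, hTS, hT, hS⟩ :=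
    exists_eq_append_cons_of_count_eq_two ((hc'.count_eq_outdeg x).trans hd)
  have huS : u ∈ S := by
    rcases eq_nil_or_concat' S with rfl | ⟨S', s, rfl⟩
    · exact absurd (by simpa using (append_inj' hTS rfl).2) hu
    · have h : r ++ [u] = (T ++ x :: S') ++ [s] := by simpa using hTS
      simp [show u = s by simpa using (append_inj' h rfl).2]
  have hyT : y = (T ++ [x]).head (by simp) := by
    rw [← hy.2]
    simp only [hTS]
    cases T <;> rfl
  rw [hTS] at hc'
  rw [hyT]
  exact hc'.append_comm.reachable_delNode_iff_of_cons_append_cons hloop hconn hS hT hcut huS hxz hz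

theorem formPerm_cyclicPairs_eq_of_forall_inA [DecidableEq V] (hloop : ∀ x : V, ¬ E x x)
    (hconn : (underlyingUG E).Connected) (hA : ∀ v, inA E v) {c c' : List V}
    (hc : IsEulerianCircuit E c) (hc' : IsEulerianCircuit E c') :
    (cyclicPairs c).formPerm = (cyclicPairs c').formPerm := by
  ext1 ⟨u, x⟩
  by_cases hux : E u x
  swap
  · rw [formPerm_apply_of_notMem (by rwa [hc.2.2]), formPerm_apply_of_notMem (by rwa [hc'.2.2])]
  obtain ⟨y, hy, hxy⟩ := hc.exists_formPerm_apply_eq hux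
  obtain ⟨y', hy', hxy'⟩ := hc'.exists_formPerm_apply_eq hux
  rw [hy, hy', Prod.mk.injEq]
  refine ⟨rfl, ?_⟩
  rcases hA x with hd | ⟨hd, hcut⟩
  · obtain ⟨w, hw⟩ := Set.ncard_eq_one.mp hd
    have hyw : y ∈ ({w} : Set V) := hw ▸ hxy
    have hy'w : y' ∈ ({w} : Set V) := hw ▸ hxy'
    exact hyw.trans hy'w.symm
  · have hu : u ≠ x := fun h => hloop x (h ▸ hux)
    have hy'x : y' ≠ x := fun h => hloop x (h ▸ hxy')
    by_contra hne
    have hr := (hc.reachable_delNode_iff hloop hconn hd hcut hux hu hy hxy' hy'x).mpr (Ne.symm hne)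
    exact (hc'.reachable_delNode_iff hloop hconn hd hcut hux hu hy' hxy' hy'x).mp hr rfl

theorem IsEulerianCircuit.swap [DecidableEq V] {c₁ c₂ : List V} {B₁ B₂ B₃ M : List (V × V)}
    (hc : IsEulerianCircuit E c₁) (h₁ : cyclicPairs c₁ = B₁ ++ B₂ ++ M ++ B₃)
    (h₂ : cyclicPairs c₂ = B₁ ++ B₃ ++ M ++ B₂) (hB₁ : B₁ ≠ []) (hB₂ : B₂ ≠ []) (hB₃ : B₃ ≠ []) :
    IsEulerianCircuit E c₂ ∧ ¬ c₁ ~r c₂ := by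
  refine ⟨hc.of_perm (h₁ ▸ h₂ ▸ perm_append_swap B₁ B₂ B₃ M), fun hr => ?_⟩
  refine formPerm_append_swap_ne (h₁ ▸ hc.2.1) hB₁ hB₂ hB₃ ?_
  rw [← h₁, ← h₂]
  exact formPerm_eq_of_isRotated hc.2.1 hr.cyclicPairs

theorem IsEulerianCircuit.exists_cons (hc : IsEulerianCircuit E c) {v : V} (hv : v ∈ c) :
    ∃ r, IsEulerianCircuit E (v :: r) := by
  obtain ⟨k, r, hk⟩ := exists_rotate_eq_cons hv
  exact ⟨r, hk ▸ hc.rotate k⟩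

theorem IsEulerianCircuit.exists_not_isRotated_of_three_le_outdeg [DecidableEq V]
    (hc : IsEulerianCircuit E c) {v : V} (hd : 3 ≤ outdeg E v) :
    ∃ c₁ c₂, IsEulerianCircuit E c₁ ∧ IsEulerianCircuit E c₂ ∧ ¬ c₁ ~r c₂ := by
  obtain ⟨r, hc₁⟩ := hc.exists_cons (v := v) (count_pos_iff.mp (by rw [hc.count_eq_outdeg]; omega))
  rw [← hc₁.count_eq_outdeg, count_cons_self] at hd
  obtain ⟨S, r', rfl, hS⟩ := eq_append_cons_of_mem (count_pos_iff.mp (by omega : 0 < r.count v))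
  rw [count_append, count_cons_self, count_eq_zero_of_not_mem hS] at hd
  obtain ⟨T, R, rfl⟩ := append_of_mem (count_pos_iff.mp (by omega : 0 < r'.count v))
  have blocks : ∀ A B C : List V, cyclicPairs (v :: (A ++ v :: (B ++ v :: C))) =
      walkPairs (v :: A) v ++ walkPairs (v :: B) v ++ [] ++ walkPairs (v :: C) v := by
    intro A B C
    simp [cyclicPairs_cons, walkPairs_cons_append_cons]
  obtain ⟨hc₂, hrot⟩ := hc₁.swap (blocks S T R) (blocks S R T) (walkPairs_cons_ne_nil _ _ _)
    (walkPairs_cons_ne_nil _ _ _) (walkPairs_cons_ne_nil _ _ _)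
  exact ⟨_, _, hc₁, hc₂, hrot⟩

theorem IsEulerianCircuit.exists_not_isRotated_of_not_isCutNode [DecidableEq V]
    (hloop : ∀ x : V, ¬ E x x) (hconn : (underlyingUG E).Connected) (hc : IsEulerianCircuit E c)
    {v : V} (hd : outdeg E v = 2) (hcut : ¬ IsCutNode (underlyingUG E) v) :
    ∃ c₁ c₂, IsEulerianCircuit E c₁ ∧ IsEulerianCircuit E c₂ ∧ ¬ c₁ ~r c₂ := by
  obtain ⟨r, hc₁⟩ := hc.exists_cons (v := v) (count_pos_iff.mp (by rw [hc.count_eq_outdeg]; omega))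
  rw [← hc₁.count_eq_outdeg] at hd
  obtain ⟨S, T, rfl, hS, hT⟩ := exists_eq_append_cons_of_count_eq_two hd
  obtain ⟨w, hwS, hwT⟩ := (hc₁.connected_delNode_iff hloop hconn hS hT).mp (not_not.mp hcut)
  obtain ⟨S₁, S₂, rfl⟩ := append_of_mem hwS
  obtain ⟨T₁, T₂, rfl⟩ := append_of_mem hwT
  have blocks : ∀ A B C D : List V, cyclicPairs (v :: (A ++ w :: B ++ v :: (C ++ w :: D))) =
      walkPairs (v :: A) w ++ walkPairs (w :: B) v ++ walkPairs (v :: C) w ++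
        walkPairs (w :: D) v := by
    intro A B C D
    simp [cyclicPairs_cons, walkPairs_cons_append_cons]
  obtain ⟨hc₂, hrot⟩ := hc₁.swap (blocks S₁ S₂ T₁ T₂) (blocks S₁ T₂ T₁ S₂)
    (walkPairs_cons_ne_nil _ _ _) (walkPairs_cons_ne_nil _ _ _) (walkPairs_cons_ne_nil _ _ _)
  exact ⟨_, _, hc₁, hc₂, hrot⟩

end Graph

theorem unique_eulerian_iff_A_eq_V_general {V : Type*} (E : V → V → Prop)
    (hloop : ∀ x : V, ¬ E x x) (hconn : (underlyingUG E).Connected)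
    (heul : ∃ c : List V, IsEulerianCircuit E c) :
    (∀ c c' : List V, IsEulerianCircuit E c → IsEulerianCircuit E c' →
        ∃ k : ℕ, c' = c.rotate k) ↔ ∀ v : V, inA E v := by
  classical
  obtain ⟨c, hc⟩ := heul
  constructor
  · intro huniq v
    have unique : ¬ ∃ c₁ c₂, IsEulerianCircuit E c₁ ∧ IsEulerianCircuit E c₂ ∧ ¬ c₁ ~r c₂ := by
      rintro ⟨c₁, c₂, h₁, h₂, hr⟩
      obtain ⟨k, hk⟩ := huniq c₁ c₂ h₁ h₂
      exact hr ⟨k, hk.symm⟩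
    have hpos : 0 < outdeg E v := hc.count_eq_outdeg v ▸ count_pos_iff.mpr (hc.mem hconn v)
    by_contra hv
    rcases (show outdeg E v = 2 ∨ 3 ≤ outdeg E v by unfold inA at hv; omega) with hd | hd
    · exact unique (hc.exists_not_isRotated_of_not_isCutNode hloop hconn hd
        fun hcut => hv (Or.inr ⟨hd, hcut⟩))
    · exact unique (hc.exists_not_isRotated_of_three_le_outdeg hd)
  · intro hA c₁ c₂ h₁ h₂
    obtain ⟨k, hk⟩ := (isRotated_iff_formPerm_cyclicPairs_eq h₁.2.1 h₂.2.1 (h₁.two_le_length hloop)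
      (h₂.two_le_length hloop)).mpr (formPerm_cyclicPairs_eq_of_forall_inA hloop hconn hA h₁ h₂)
    exact ⟨k, hk.symm⟩

/-- `G` has a unique Eulerian circuit (up to cyclic rotation) iff `A(G) = V`. -/
theorem unique_eulerian_iff_A_eq_V {V : Type*} [Fintype V] (E : V → V → Prop)
    (hloop : ∀ x : V, ¬ E x x) (hconn : (underlyingUG E).Connected)
    (heul : ∃ c : List V, IsEulerianCircuit E c) :
    (∀ c c' : List V, IsEulerianCircuit E c → IsEulerianCircuit E c' →
        ∃ k : ℕ, c' = c.rotate k) ↔ ∀ v : V, inA E v :=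
  unique_eulerian_iff_A_eq_V_general E hloop hconn heul
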